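/- arXiv:1003.5744 — 2 statements merged into one kernel-verified Lean document; each statement's English description precedes it below -/
import Mathlib

section
/- Let X be a set with d : X × X × X → ℝ satisfying (Sym), (Tetr), (Z), (N), (B) and (Trans), and let (x_i) be a sequence in X which is not Cauchy with respect to φ. If LIM(y,(x_i)), LIM(y′,(x_i)) and LIM(y″,(x_i)) all hold, then the points y, y′, y″ are colinear, i.e. d(y,y′,y″) = 0. -/
/-!
(Sym), (Z) and (Tetr) make `d` nonnegative. Since `(x_i)` is not Cauchy, there are `η > 0` and
arbitrarily late pairs `x_n, x_m` with a witness `z` such that `η ≤ d(z, x_n, x_m)`. For such a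
pair, (Tetr) through `x_n` followed by (Trans) for each of the three summands gives
`d(y, y', y'') · η ≤ 2 (d(y, x_n, x_m) + d(y', x_n, x_m) + d(y'', x_n, x_m))`,
and the right-hand side becomes arbitrarily small by the three LIM hypotheses.
-/

open Filter Topology

section TwoMetric

variable {X : Type*} {d : X → X → X → ℝ}

/-- The condition `LIM(y, (x_i))`. -/
def IsLim (d : X → X → X → ℝ) (y : X) (x : ℕ → X) : Prop :=
  ∀ ε > (0 : ℝ), ∃ N : ℕ, ∀ i ≥ N, ∀ j ≥ N, d y (x i) (x j) < ε

theorem nonneg_of_tetr (hSym₁ : ∀ x y z : X, d x y z = d y x z)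
    (hSym₂ : ∀ x y z : X, d x y z = d x z y)
    (hTetr : ∀ a b c x : X, d a b c ≤ d a b x + d b c x + d a c x)
    (hZ : ∀ a b : X, d a b b = 0) (a b c : X) : 0 ≤ d a b c := by
  have hbbc : d b b c = 0 := by rw [hSym₂, hSym₁]; exact hZ c b
  linarith [hTetr a b b c, hZ a b]

theorem mul_le_two_mul_add_of_tetr_trans (hnn : ∀ a b c : X, 0 ≤ d a b c)
    (hTetr : ∀ a b c x : X, d a b c ≤ d a b x + d b c x + d a c x)
    (hTrans : ∀ a b c x y : X, d a b x * d c x y ≤ d a x y + d b x y) (y y' y'' z u v : X) :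
    d y y' y'' * d z u v ≤ 2 * (d y u v + d y' u v + d y'' u v) :=
  calc d y y' y'' * d z u v ≤ (d y y' u + d y' y'' u + d y y'' u) * d z u v :=
        mul_le_mul_of_nonneg_right (hTetr y y' y'' u) (hnn z u v)
    _ = d y y' u * d z u v + d y' y'' u * d z u v + d y y'' u * d z u v := by ring
    _ ≤ 2 * (d y u v + d y' u v + d y'' u v) := by
        linarith [hTrans y y' z u v, hTrans y' y'' z u v, hTrans y y'' z u v]

theorem exists_frequently_le_of_not_cauchy {φ : X → X → ℝ}
    (hSym₁ : ∀ x y z : X, d x y z = d y x z) (hSym₂ : ∀ x y z : X, d x y z = d x z y)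
    (hφ : ∀ x y : X, IsLUB (Set.range fun z => d x y z) (φ x y)) {x : ℕ → X}
    (hnotCauchy : ¬ (∀ ε > (0 : ℝ), ∃ N : ℕ, ∀ n ≥ N, ∀ m ≥ N, φ (x n) (x m) < ε)) :
    ∃ η > 0, ∀ N : ℕ, ∃ n ≥ N, ∃ m ≥ N, ∃ z, η ≤ d z (x n) (x m) := by
  push Not at hnotCauchy
  obtain ⟨ε, hε, hfar⟩ := hnotCauchy
  refine ⟨ε / 2, by positivity, fun N => ?_⟩
  obtain ⟨n, hn, m, hm, hεφ⟩ := hfar N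
  obtain ⟨_, ⟨z, rfl⟩, hlt, -⟩ := (hφ (x n) (x m)).exists_between (by linarith : ε / 2 < φ _ _)
  exact ⟨n, hn, m, hm, z, by rw [hSym₁ z, hSym₂ (x n)]; exact hlt.le⟩

theorem eq_zero_of_isLim_of_frequently_le (hnn : ∀ a b c : X, 0 ≤ d a b c)
    (hTetr : ∀ a b c x : X, d a b c ≤ d a b x + d b c x + d a c x)
    (hTrans : ∀ a b c x y : X, d a b x * d c x y ≤ d a x y + d b x y)
    {x : ℕ → X} {η : ℝ} (hη : 0 < η) (hfar : ∀ N : ℕ, ∃ n ≥ N, ∃ m ≥ N, ∃ z, η ≤ d z (x n) (x m))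
    {y y' y'' : X} (hy : IsLim d y x) (hy' : IsLim d y' x) (hy'' : IsLim d y'' x) :
    d y y' y'' = 0 := by
  have hsmall : ∀ δ > 0, d y y' y'' * η ≤ 6 * δ := by
    intro δ hδ
    obtain ⟨N₁, h₁⟩ := hy δ hδ
    obtain ⟨N₂, h₂⟩ := hy' δ hδ
    obtain ⟨N₃, h₃⟩ := hy'' δ hδ
    obtain ⟨n, hn, m, hm, z, hz⟩ := hfar (max N₁ (max N₂ N₃))
    calc d y y' y'' * η ≤ d y y' y'' * d z (x n) (x m) :=
          mul_le_mul_of_nonneg_left hz (hnn y y' y'')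
      _ ≤ 2 * (d y (x n) (x m) + d y' (x n) (x m) + d y'' (x n) (x m)) :=
          mul_le_two_mul_add_of_tetr_trans hnn hTetr hTrans y y' y'' z (x n) (x m)
      _ ≤ 6 * δ := by
          linarith [h₁ n (by omega) m (by omega), h₂ n (by omega) m (by omega),
            h₃ n (by omega) m (by omega)]
  by_contra hne
  have hpos : 0 < d y y' y'' * η := mul_pos ((hnn y y' y'').lt_of_ne' hne) hη
  linarith [hsmall (d y y' y'' * η / 12) (by positivity)]

end TwoMetric

theorem stmt_10_general {X : Type*} (d : X → X → X → ℝ) (φ : X → X → ℝ)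
    (hSym₁ : ∀ x y z : X, d x y z = d y x z)
    (hSym₂ : ∀ x y z : X, d x y z = d x z y)
    (hTetr : ∀ a b c x : X, d a b c ≤ d a b x + d b c x + d a c x)
    (hZ : ∀ a b : X, d a b b = 0)
    (hTrans : ∀ a b c x y : X, d a b x * d c x y ≤ d a x y + d b x y)
    (hφ : ∀ x y : X, IsLUB (Set.range fun z => d x y z) (φ x y))
    (x : ℕ → X)
    (hnotCauchy : ¬ (∀ ε > (0 : ℝ), ∃ N : ℕ, ∀ n ≥ N, ∀ m ≥ N, φ (x n) (x m) < ε))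
    (y y' y'' : X)
    (hy : ∀ ε > (0 : ℝ), ∃ N : ℕ, ∀ i ≥ N, ∀ j ≥ N, d y (x i) (x j) < ε)
    (hy' : ∀ ε > (0 : ℝ), ∃ N : ℕ, ∀ i ≥ N, ∀ j ≥ N, d y' (x i) (x j) < ε)
    (hy'' : ∀ ε > (0 : ℝ), ∃ N : ℕ, ∀ i ≥ N, ∀ j ≥ N, d y'' (x i) (x j) < ε) :
    d y y' y'' = 0 := by
  obtain ⟨η, hη, hfar⟩ := exists_frequently_le_of_not_cauchy hSym₁ hSym₂ hφ hnotCauchy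
  exact eq_zero_of_isLim_of_frequently_le (nonneg_of_tetr hSym₁ hSym₂ hTetr hZ) hTetr hTrans
    hη hfar hy hy' hy''

theorem stmt_10 {X : Type*} (d : X → X → X → ℝ) (φ : X → X → ℝ)
    (hSym₁ : ∀ x y z : X, d x y z = d y x z)
    (hSym₂ : ∀ x y z : X, d x y z = d x z y)
    (hTetr : ∀ a b c x : X, d a b c ≤ d a b x + d b c x + d a c x)
    (hZ : ∀ a b : X, d a b b = 0)
    (hN : ∀ a b : X, a ≠ b → ∃ c : X, d a b c ≠ 0)
    (hB : ∀ x y z : X, d x y z ≤ 1)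
    (hTrans : ∀ a b c x y : X, d a b x * d c x y ≤ d a x y + d b x y)
    (hφ : ∀ x y : X, IsLUB (Set.range fun z => d x y z) (φ x y))
    (x : ℕ → X)
    (hnotCauchy : ¬ (∀ ε > (0 : ℝ), ∃ N : ℕ, ∀ n ≥ N, ∀ m ≥ N, φ (x n) (x m) < ε))
    (y y' y'' : X)
    (hy : ∀ ε > (0 : ℝ), ∃ N : ℕ, ∀ i ≥ N, ∀ j ≥ N, d y (x i) (x j) < ε)
    (hy' : ∀ ε > (0 : ℝ), ∃ N : ℕ, ∀ i ≥ N, ∀ j ≥ N, d y' (x i) (x j) < ε)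
    (hy'' : ∀ ε > (0 : ℝ), ∃ N : ℕ, ∀ i ≥ N, ∀ j ≥ N, d y'' (x i) (x j) < ε) :
    d y y' y'' = 0 :=
  stmt_10_general d φ hSym₁ hSym₂ hTetr hZ hTrans hφ x hnotCauchy y y' y'' hy hy' hy''
end

section
/- Let X be a set with d : X × X × X → ℝ satisfying (Sym), (Tetr), (Z), (N), (B) and (Trans), such that (X,φ) is compact. Then for every tri-Cauchy sequence (x_i) the set Y of points y with LIM(y,(x_i)) is nonempty, and one of the following holds: either (x_i) converges with respect to φ to some point of X, or the set Y is a line. -/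
open Filter Topology

/-!
Compactness yields a subsequence of `x` converging to some `y`, and tri-Cauchy-ness makes every
such subsequential limit a LIM point. If `x` is Cauchy for `φ`, it converges to `y` by the
quasi-triangle inequality `φ a b ≤ 2 φ a w + φ b w`. Otherwise there are arbitrarily late pairs
`xᵢ, xⱼ` and points `c` with `d xᵢ xⱼ c` bounded below; (Trans) then forces `d a b xᵢ` to be small
for any two LIM points `a, b`, and (Tetr) makes any three LIM points colinear. For maximality,
a point `z` colinear with all LIM points but not itself one has late pairs `xᵢ, xⱼ` far from it;
limits `a, b` of subsequences of those pairs are LIM points, and (Tetr) bounds `d z xᵢ xⱼ` by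
`d z a b = 0` plus small terms.
-/

structure IsTwoMetric {X : Type*} (d : X → X → X → ℝ) : Prop where
  comm₁₂ : ∀ x y z, d x y z = d y x z
  comm₂₃ : ∀ x y z, d x y z = d x z y
  tetr : ∀ a b c x, d a b c ≤ d a b x + d b c x + d a c x
  eq_zero : ∀ a b, d a b b = 0

/-- `LIM(y, (xᵢ))` of the paper. -/
def IsLimPoint {X : Type*} (d : X → X → X → ℝ) (x : ℕ → X) (y : X) : Prop :=
  ∀ ε > (0 : ℝ), ∃ N : ℕ, ∀ i ≥ N, ∀ j ≥ N, d y (x i) (x j) < ε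

def IsTriCauchy {X : Type*} (d : X → X → X → ℝ) (x : ℕ → X) : Prop :=
  ∀ ε > (0 : ℝ), ∃ m : ℕ, ∀ i ≥ m, ∀ j ≥ m, ∀ k ≥ m, d (x i) (x j) (x k) < ε

def IsAssocDist {X : Type*} (d : X → X → X → ℝ) (φ : X → X → ℝ) : Prop :=
  ∀ x y : X, IsLUB (Set.range fun z => d x y z) (φ x y)

section

variable {X : Type*} {d : X → X → X → ℝ} {φ : X → X → ℝ}

namespace IsTwoMetric

theorem nonneg (hd : IsTwoMetric d) (a b c : X) : 0 ≤ d a b c := by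
  have hbbc : d b b c = 0 := by rw [hd.comm₂₃, hd.comm₁₂, hd.eq_zero]
  linarith [hd.tetr a b b c, hd.eq_zero a b]

theorem d_le_phi (hφ : IsAssocDist d φ) (a b c : X) : d a b c ≤ φ a b :=
  (hφ a b).1 ⟨c, rfl⟩

theorem d_le_phi₁₃ (hd : IsTwoMetric d) (hφ : IsAssocDist d φ) (a b c : X) :
    d a b c ≤ φ a c :=
  hd.comm₂₃ a b c ▸ d_le_phi hφ a c b

theorem d_le_phi₂₃ (hd : IsTwoMetric d) (hφ : IsAssocDist d φ) (a b c : X) :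
    d a b c ≤ φ b c :=
  hd.comm₁₂ a b c ▸ hd.d_le_phi₁₃ hφ b a c

theorem d_le_phi₃₁ (hd : IsTwoMetric d) (hφ : IsAssocDist d φ) (a b c : X) :
    d a b c ≤ φ c a := by
  rw [hd.comm₁₂, hd.comm₂₃, hd.comm₁₂]
  exact hd.d_le_phi₁₃ hφ c b a

theorem phi_nonneg (hd : IsTwoMetric d) (hφ : IsAssocDist d φ) (a b : X) :
    0 ≤ φ a b :=
  hd.eq_zero a b ▸ d_le_phi hφ a b b

theorem phi_comm (hd : IsTwoMetric d) (hφ : IsAssocDist d φ) (a b : X) :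
    φ a b = φ b a := by
  have hrange : (Set.range fun z => d a b z) = Set.range fun z => d b a z := by
    simp only [hd.comm₁₂ a b]
  exact (hφ a b).unique (hrange ▸ hφ b a)

theorem phi_le_two_mul_add (hd : IsTwoMetric d) (hφ : IsAssocDist d φ) (a b w : X) :
    φ a b ≤ 2 * φ a w + φ b w := by
  refine (hφ a b).2 ?_
  rintro _ ⟨z, rfl⟩
  linarith [hd.tetr a b z w, hd.d_le_phi₁₃ hφ a b w, hd.d_le_phi₁₃ hφ b z w,
    hd.d_le_phi₁₃ hφ a z w]

theorem le_add_two_mul_phi (hd : IsTwoMetric d) (hφ : IsAssocDist d φ) (z u w a b : X) :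
    d z u w ≤ d z a b + 2 * φ u a + 2 * φ w b := by
  have hzba : d z b a = d z a b := hd.comm₂₃ z b a
  linarith [hd.tetr z u w b, hd.tetr z u b a, hd.d_le_phi₂₃ hφ z u a, hd.d_le_phi₁₃ hφ u b a,
    hd.d_le_phi₂₃ hφ u w b, hd.d_le_phi₂₃ hφ z w b]

theorem mul_le_of_trans (hd : IsTwoMetric d)
    (hTrans : ∀ a b c x y : X, d a b x * d c x y ≤ d a x y + d b x y) {a b c u w : X}
    {κ δ : ℝ} (hκ : κ ≤ d u w c) (ha : d a u w ≤ δ) (hb : d b u w ≤ δ) :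
    d a b u * κ ≤ 2 * δ := by
  have hc : d c u w = d u w c := by rw [hd.comm₁₂, hd.comm₂₃]
  have htrans := hTrans a b c u w
  rw [hc] at htrans
  nlinarith [hd.nonneg a b u]

end IsTwoMetric

theorem IsLimPoint.eventually {x : ℕ → X} {y : X} (h : IsLimPoint d x y) {ε : ℝ} (hε : 0 < ε) :
    ∀ᶠ N in atTop, ∀ i ≥ N, ∀ j ≥ N, d y (x i) (x j) < ε := by
  obtain ⟨N, hN⟩ := h ε hε
  exact eventually_atTop.2 ⟨N, fun M hM i hi j hj => hN i (hM.trans hi) j (hM.trans hj)⟩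

theorem isLimPoint_of_tendsto_subseq (hd : IsTwoMetric d) (hφ : IsAssocDist d φ) {x : ℕ → X}
    (hx : IsTriCauchy d x) {v : ℕ → ℕ} (hv : Tendsto v atTop atTop) {y : X}
    (hy : Tendsto (fun n => φ (x (v n)) y) atTop (𝓝 0)) : IsLimPoint d x y := by
  intro ε hε
  have hε4 : 0 < ε / 4 := by positivity
  obtain ⟨m, hm⟩ := hx (ε / 4) hε4
  obtain ⟨n, hvn, hyn⟩ :=
    ((hv.eventually_ge_atTop m).and (hy.eventually (gt_mem_nhds hε4))).exists
  refine ⟨m, fun i hi j hj => ?_⟩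
  linarith [hd.tetr y (x i) (x j) (x (v n)), hm i hi j hj (v n) hvn,
    hd.d_le_phi₃₁ hφ y (x i) (x (v n)), hd.d_le_phi₃₁ hφ y (x j) (x (v n))]

theorem tendsto_of_cauchy_of_tendsto_subseq (hd : IsTwoMetric d) (hφ : IsAssocDist d φ)
    {x : ℕ → X} (hx : ∀ ε > (0 : ℝ), ∃ m : ℕ, ∀ i ≥ m, ∀ j ≥ m, φ (x i) (x j) < ε)
    {v : ℕ → ℕ} (hv : Tendsto v atTop atTop) {y : X}
    (hy : Tendsto (fun n => φ (x (v n)) y) atTop (𝓝 0)) :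
    Tendsto (fun n => φ (x n) y) atTop (𝓝 0) := by
  refine Metric.tendsto_atTop.2 fun ε hε => ?_
  have hε4 : 0 < ε / 4 := by positivity
  obtain ⟨m, hm⟩ := hx (ε / 4) hε4
  obtain ⟨k, hvk, hyk⟩ :=
    ((hv.eventually_ge_atTop m).and (hy.eventually (gt_mem_nhds hε4))).exists
  refine ⟨m, fun n hn => ?_⟩
  rw [Real.dist_eq, sub_zero, abs_of_nonneg (hd.phi_nonneg hφ _ _)]
  linarith [hd.phi_le_two_mul_add hφ (x n) y (x (v k)), hd.phi_comm hφ y (x (v k)),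
    hm n hn (v k) hvk]

theorem colinear_of_isLimPoint (hd : IsTwoMetric d) (hφ : IsAssocDist d φ)
    (hTrans : ∀ a b c x y : X, d a b x * d c x y ≤ d a x y + d b x y) {x : ℕ → X} {ε₀ : ℝ}
    (hε₀ : 0 < ε₀) (hsep : ∀ N : ℕ, ∃ i ≥ N, ∃ j ≥ N, ε₀ ≤ φ (x i) (x j)) {p q r : X}
    (hp : IsLimPoint d x p) (hq : IsLimPoint d x q) (hr : IsLimPoint d x r) : d p q r = 0 := by
  refine le_antisymm (le_of_forall_pos_le_add fun η hη => ?_) (hd.nonneg p q r)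
  -- chosen so that each of the three terms of (Tetr) at `xᵢ` below is at most `η / 3`
  have hδ : 0 < η * ε₀ / 12 := by positivity
  obtain ⟨N, hpN, hqN, hrN⟩ :=
    ((hp.eventually hδ).and ((hq.eventually hδ).and (hr.eventually hδ))).exists
  obtain ⟨i, hi, j, hj, hij⟩ := hsep N
  obtain ⟨_, ⟨c, rfl⟩, hc, -⟩ := (hφ (x i) (x j)).exists_between ((half_lt_self hε₀).trans_le hij)
  have hpq := hd.mul_le_of_trans hTrans hc.le (hpN i hi j hj).le (hqN i hi j hj).le
  have hqr := hd.mul_le_of_trans hTrans hc.le (hqN i hi j hj).le (hrN i hi j hj).le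
  have hpr := hd.mul_le_of_trans hTrans hc.le (hpN i hi j hj).le (hrN i hi j hj).le
  have hsum : (d p q (x i) + d q r (x i) + d p r (x i)) * (ε₀ / 2) ≤ η * (ε₀ / 2) := by linarith
  linarith [hd.tetr p q r (x i), le_of_mul_le_mul_right hsum (half_pos hε₀)]

theorem isLimPoint_of_forall_colinear (hd : IsTwoMetric d) (hφ : IsAssocDist d φ)
    (hcompact : ∀ u : ℕ → X, ∃ y : X, ∃ v : ℕ → ℕ, StrictMono v ∧
      Tendsto (fun n => φ (u (v n)) y) atTop (𝓝 0))
    {x : ℕ → X} (hx : IsTriCauchy d x) {z : X}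
    (hz : ∀ a b, IsLimPoint d x a → IsLimPoint d x b → d z a b = 0) : IsLimPoint d x z := by
  intro ε hε
  by_contra! hfar
  choose I hI J hJ hIJ using hfar
  obtain ⟨a, v, hv, ha⟩ := hcompact fun n => x (I n)
  obtain ⟨b, w, hw, hb⟩ := hcompact fun n => x (J (v n))
  have hIv : Tendsto (fun n => I (v n)) atTop atTop :=
    (tendsto_atTop_mono hI tendsto_id).comp hv.tendsto_atTop
  have hJv : Tendsto (fun n => J (v n)) atTop atTop :=
    (tendsto_atTop_mono hJ tendsto_id).comp hv.tendsto_atTop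
  have hab : d z a b = 0 := hz a b (isLimPoint_of_tendsto_subseq hd hφ hx hIv ha)
    (isLimPoint_of_tendsto_subseq hd hφ hx (hJv.comp hw.tendsto_atTop) hb)
  have hε4 : 0 < ε / 4 := by positivity
  obtain ⟨n, han, hbn⟩ := (((ha.comp hw.tendsto_atTop).eventually (gt_mem_nhds hε4)).and
    (hb.eventually (gt_mem_nhds hε4))).exists
  simp only [Function.comp_def] at han
  linarith [hd.le_add_two_mul_phi hφ z (x (I (v (w n)))) (x (J (v (w n)))) a b, hIJ (v (w n))]

end

theorem stmt_15_general {X : Type*} (d : X → X → X → ℝ) (φ : X → X → ℝ)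
    (hSym₁ : ∀ x y z : X, d x y z = d y x z)
    (hSym₂ : ∀ x y z : X, d x y z = d x z y)
    (hTetr : ∀ a b c x : X, d a b c ≤ d a b x + d b c x + d a c x)
    (hZ : ∀ a b : X, d a b b = 0)
    (hTrans : ∀ a b c x y : X, d a b x * d c x y ≤ d a x y + d b x y)
    (hφ : ∀ x y : X, IsLUB (Set.range fun z => d x y z) (φ x y))
    (hcompact : ∀ u : ℕ → X, ∃ y : X, ∃ v : ℕ → ℕ, StrictMono v ∧
      Tendsto (fun n => φ (u (v n)) y) atTop (𝓝 0)) :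
    ∀ x : ℕ → X,
      (∀ ε > (0 : ℝ), ∃ m : ℕ, ∀ i ≥ m, ∀ j ≥ m, ∀ k ≥ m, d (x i) (x j) (x k) < ε) →
      (∃ y : X, ∀ ε > (0 : ℝ), ∃ N : ℕ, ∀ i ≥ N, ∀ j ≥ N, d y (x i) (x j) < ε) ∧
      ((∃ y : X, Tendsto (fun n => φ (x n) y) atTop (𝓝 0)) ∨
        ((∀ p ∈ {y : X | ∀ ε > (0 : ℝ), ∃ N : ℕ, ∀ i ≥ N, ∀ j ≥ N, d y (x i) (x j) < ε},
            ∀ q ∈ {y : X | ∀ ε > (0 : ℝ), ∃ N : ℕ, ∀ i ≥ N, ∀ j ≥ N, d y (x i) (x j) < ε},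
            ∀ r ∈ {y : X | ∀ ε > (0 : ℝ), ∃ N : ℕ, ∀ i ≥ N, ∀ j ≥ N, d y (x i) (x j) < ε},
            d p q r = 0) ∧
          ∀ Z : Set X,
            {y : X | ∀ ε > (0 : ℝ), ∃ N : ℕ, ∀ i ≥ N, ∀ j ≥ N, d y (x i) (x j) < ε} ⊆ Z →
            (∀ p ∈ Z, ∀ q ∈ Z, ∀ r ∈ Z, d p q r = 0) →
            Z = {y : X | ∀ ε > (0 : ℝ), ∃ N : ℕ, ∀ i ≥ N, ∀ j ≥ N, d y (x i) (x j) < ε})) := by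
  intro x hx
  have hd : IsTwoMetric d := ⟨hSym₁, hSym₂, hTetr, hZ⟩
  obtain ⟨y₀, v₀, hv₀, hy₀⟩ := hcompact x
  refine ⟨⟨y₀, isLimPoint_of_tendsto_subseq hd hφ hx hv₀.tendsto_atTop hy₀⟩, ?_⟩
  by_cases hCauchy : ∀ ε > (0 : ℝ), ∃ m : ℕ, ∀ i ≥ m, ∀ j ≥ m, φ (x i) (x j) < ε
  · exact .inl ⟨y₀, tendsto_of_cauchy_of_tendsto_subseq hd hφ hCauchy hv₀.tendsto_atTop hy₀⟩
  · push Not at hCauchy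
    obtain ⟨ε₀, hε₀, hsep⟩ := hCauchy
    refine .inr ⟨fun p hp q hq r hr => colinear_of_isLimPoint hd hφ hTrans hε₀ hsep hp hq hr,
      fun Z hYZ hZ => subset_antisymm (fun z hz => ?_) hYZ⟩
    exact isLimPoint_of_forall_colinear hd hφ hcompact hx
      fun a b ha hb => hZ z hz a (hYZ ha) b (hYZ hb)

theorem stmt_15 {X : Type*} (d : X → X → X → ℝ) (φ : X → X → ℝ)
    (hSym₁ : ∀ x y z : X, d x y z = d y x z)
    (hSym₂ : ∀ x y z : X, d x y z = d x z y)
    (hTetr : ∀ a b c x : X, d a b c ≤ d a b x + d b c x + d a c x)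
    (hZ : ∀ a b : X, d a b b = 0)
    (hN : ∀ a b : X, a ≠ b → ∃ c : X, d a b c ≠ 0)
    (hB : ∀ x y z : X, d x y z ≤ 1)
    (hTrans : ∀ a b c x y : X, d a b x * d c x y ≤ d a x y + d b x y)
    (hφ : ∀ x y : X, IsLUB (Set.range fun z => d x y z) (φ x y))
    (hcompact : ∀ u : ℕ → X, ∃ y : X, ∃ v : ℕ → ℕ, StrictMono v ∧
      Tendsto (fun n => φ (u (v n)) y) atTop (𝓝 0)) :
    ∀ x : ℕ → X,
      (∀ ε > (0 : ℝ), ∃ m : ℕ, ∀ i ≥ m, ∀ j ≥ m, ∀ k ≥ m, d (x i) (x j) (x k) < ε) →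
      (∃ y : X, ∀ ε > (0 : ℝ), ∃ N : ℕ, ∀ i ≥ N, ∀ j ≥ N, d y (x i) (x j) < ε) ∧
      ((∃ y : X, Tendsto (fun n => φ (x n) y) atTop (𝓝 0)) ∨
        ((∀ p ∈ {y : X | ∀ ε > (0 : ℝ), ∃ N : ℕ, ∀ i ≥ N, ∀ j ≥ N, d y (x i) (x j) < ε},
            ∀ q ∈ {y : X | ∀ ε > (0 : ℝ), ∃ N : ℕ, ∀ i ≥ N, ∀ j ≥ N, d y (x i) (x j) < ε},
            ∀ r ∈ {y : X | ∀ ε > (0 : ℝ), ∃ N : ℕ, ∀ i ≥ N, ∀ j ≥ N, d y (x i) (x j) < ε},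
            d p q r = 0) ∧
          ∀ Z : Set X,
            {y : X | ∀ ε > (0 : ℝ), ∃ N : ℕ, ∀ i ≥ N, ∀ j ≥ N, d y (x i) (x j) < ε} ⊆ Z →
            (∀ p ∈ Z, ∀ q ∈ Z, ∀ r ∈ Z, d p q r = 0) →
            Z = {y : X | ∀ ε > (0 : ℝ), ∃ N : ℕ, ∀ i ≥ N, ∀ j ≥ N, d y (x i) (x j) < ε})) :=
  stmt_15_general d φ hSym₁ hSym₂ hTetr hZ hTrans hφ hcompact
end
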